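/- arXiv:2012.10962 — 11 statements merged into one kernel-verified Lean document; each statement's English description precedes it below -/
import Mathlib

section
/- Let a : ℕ → ℝ be a sequence such that lim_{k→∞} a_k exists, and let n ≥ 1. If a is n-monotone (i.e., Σ_{i=0}^{n} (-1)^i C(n,i) a_{k+i} ≥ 0 for all k), then a is j-monotone for every 1 ≤ j ≤ n. -/
private lemma Tstep (a : ℕ → ℝ) (j k : ℕ) :
    (∑ i ∈ Finset.range (j+2), (-1:ℝ)^i * ((j+1).choose i) * a (k+i))
    = (∑ i ∈ Finset.range (j+1), (-1:ℝ)^i * (j.choose i) * a (k+i))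
      - (∑ i ∈ Finset.range (j+1), (-1:ℝ)^i * (j.choose i) * a ((k+1)+i)) := by
  rw [Finset.sum_range_succ' _ (j+1)]
  rw [Finset.sum_range_succ' (fun i => (-1:ℝ)^i * ((j.choose i):ℝ) * a (k+i)) j]
  have hch : ∀ i, ((j+1).choose (i+1) : ℝ) = (j.choose i : ℝ) + (j.choose (i+1) : ℝ) := by
    intro i
    rw [Nat.choose_succ_succ]
    push_cast; ring
  have h1 : ∀ i ∈ Finset.range (j+1),
      (-1:ℝ)^(i+1) * ((j+1).choose (i+1)) * a (k+(i+1))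
      = (-1:ℝ)^(i+1) * (j.choose (i+1)) * a (k+(i+1))
        - (-1:ℝ)^i * (j.choose i) * a ((k+1)+i) := by
    intro i _
    rw [hch i]
    have : k + (i+1) = (k+1) + i := by omega
    rw [this]
    ring
  rw [Finset.sum_congr rfl h1, Finset.sum_sub_distrib]
  have h2 : (∑ i ∈ Finset.range (j+1), (-1:ℝ)^(i+1) * (j.choose (i+1)) * a (k+(i+1)))
      = ∑ i ∈ Finset.range j, (-1:ℝ)^(i+1) * (j.choose (i+1)) * a (k+(i+1)) := by
    rw [Finset.sum_range_succ, Nat.choose_succ_self]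
    simp
  rw [h2]
  simp
  ring

private lemma Ttendsto (a : ℕ → ℝ) (L : ℝ) (hL : Filter.Tendsto a Filter.atTop (nhds L))
    (j : ℕ) (hj : 1 ≤ j) :
    Filter.Tendsto (fun k => ∑ i ∈ Finset.range (j+1), (-1:ℝ)^i * (j.choose i) * a (k+i))
      Filter.atTop (nhds 0) := by
  have hsum : (∑ i ∈ Finset.range (j+1), (-1:ℝ)^i * (j.choose i)) = 0 := by
    have := Int.alternating_sum_range_choose (n := j)
    rw [if_neg (by omega : j ≠ 0)] at this
    have : ((∑ i ∈ Finset.range (j+1), (-1:ℤ)^i * (j.choose i) : ℤ) : ℝ) = ((0:ℤ):ℝ) := by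
      rw [this]
    push_cast at this
    exact this
  have : Filter.Tendsto (fun k => ∑ i ∈ Finset.range (j+1), (-1:ℝ)^i * (j.choose i) * a (k+i))
      Filter.atTop (nhds (∑ i ∈ Finset.range (j+1), (-1:ℝ)^i * (j.choose i) * L)) := by
    apply tendsto_finset_sum
    intro i _
    exact (hL.comp (Filter.tendsto_add_atTop_nat i)).const_mul _
  convert this using 2
  rw [← Finset.sum_mul, hsum, zero_mul]

private lemma Tdown (a : ℕ → ℝ) (L : ℝ) (hL : Filter.Tendsto a Filter.atTop (nhds L))
    (j : ℕ) (hj : 1 ≤ j)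
    (h : ∀ k, 0 ≤ ∑ i ∈ Finset.range (j+2), (-1:ℝ)^i * ((j+1).choose i) * a (k+i)) :
    ∀ k, 0 ≤ ∑ i ∈ Finset.range (j+1), (-1:ℝ)^i * (j.choose i) * a (k+i) := by
  set T : ℕ → ℝ := fun k => ∑ i ∈ Finset.range (j+1), (-1:ℝ)^i * (j.choose i) * a (k+i) with hT
  have hanti : Antitone T := by
    apply antitone_nat_of_succ_le
    intro k
    have := h k
    rw [Tstep a j k] at this
    linarith
  intro k
  have := le_of_tendsto (Ttendsto a L hL j hj)
    (Filter.eventually_atTop.2 ⟨k, fun m hm => hanti hm⟩)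
  exact this

theorem stmt1 (a : ℕ → ℝ) (L : ℝ) (hL : Filter.Tendsto a Filter.atTop (nhds L))
    (n : ℕ) (hn : 1 ≤ n)
    (hmono : ∀ k, 0 ≤ ∑ i ∈ Finset.range (n+1), (-1 : ℝ)^i * (n.choose i) * a (k+i)) :
    ∀ j, 1 ≤ j → j ≤ n →
      ∀ k, 0 ≤ ∑ i ∈ Finset.range (j+1), (-1 : ℝ)^i * (j.choose i) * a (k+i) := by
  suffices H : ∀ m j, 1 ≤ j → j + m = n →
      ∀ k, 0 ≤ ∑ i ∈ Finset.range (j+1), (-1:ℝ)^i * (j.choose i) * a (k+i) by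
    intro j hj1 hjn
    exact H (n - j) j hj1 (by omega)
  intro m
  induction m with
  | zero => intro j hj1 hjn; rw [Nat.add_zero] at hjn; subst hjn; exact hmono
  | succ m ih =>
    intro j hj1 hjn
    exact Tdown a L hL j hj1 (ih (j+1) (by omega) (by omega))
end

section
/- If (γ_k) is a sequence of positive reals that is decreasing (1-monotone) and n-monotone for some n ∈ ℕ, then (γ_k) is j-monotone for every 1 ≤ j ≤ n. -/
open Finset

noncomputable def dd (γ : ℕ → ℝ) (j k : ℕ) : ℝ :=
  ∑ i ∈ Finset.range (j+1), (-1 : ℝ)^i * (j.choose i) * γ (k+i)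

lemma dd_rec (γ : ℕ → ℝ) (j k : ℕ) :
    dd γ (j+1) k = dd γ j k - dd γ j (k+1) := by
  have h1 : dd γ (j+1) k
      = (∑ i ∈ Finset.range (j+1),
          ((-((-1:ℝ)^i * (j.choose i) * γ ((k+1)+i)))
            + (-1:ℝ)^(i+1) * (j.choose (i+1)) * γ (k+(i+1)))) + γ k := by
    rw [dd, Finset.sum_range_succ' (fun i => (-1:ℝ)^i * ((j+1).choose i) * γ (k+i)) (j+1)]
    simp only [Nat.choose_succ_succ', pow_zero, Nat.choose_zero_right, Nat.cast_one,
      one_mul, Nat.add_zero, Nat.cast_add]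
    congr 1
    apply Finset.sum_congr rfl
    intro i _
    have : (k+1)+i = k+(i+1) := by omega
    rw [this]
    ring
  have h2 : ∑ i ∈ Finset.range (j+1), (-((-1:ℝ)^i * (j.choose i) * γ ((k+1)+i)))
      = - dd γ j (k+1) := by
    rw [dd, Finset.sum_neg_distrib]
  have h3 : ∑ i ∈ Finset.range (j+1), (-1:ℝ)^(i+1) * (j.choose (i+1)) * γ (k+(i+1))
      = dd γ j k - γ k := by
    rw [Finset.sum_range_succ, Nat.choose_succ_self]
    rw [dd, Finset.sum_range_succ' (fun i => (-1:ℝ)^i * (j.choose i) * γ (k+i)) j]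
    simp
  rw [h1, Finset.sum_add_distrib, h2, h3]
  ring

lemma gamma_le (γ : ℕ → ℝ) (hdec : ∀ k, γ (k+1) ≤ γ k) (m : ℕ) : γ m ≤ γ 0 := by
  induction m with
  | zero => exact le_refl _
  | succ m ih => exact (hdec m).trans ih

lemma dd_bound (γ : ℕ → ℝ) (hpos : ∀ k, 0 < γ k) (hdec : ∀ k, γ (k+1) ≤ γ k)
    (j k : ℕ) : |dd γ j k| ≤ 2^j * γ 0 := by
  calc |dd γ j k| ≤ ∑ i ∈ Finset.range (j+1), |(-1:ℝ)^i * (j.choose i) * γ (k+i)| :=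
        Finset.abs_sum_le_sum_abs _ _
    _ ≤ ∑ i ∈ Finset.range (j+1), ((j.choose i : ℝ)) * γ 0 := by
        apply Finset.sum_le_sum
        intro i _
        rw [abs_mul, abs_mul, abs_pow, abs_neg, abs_one, one_pow, one_mul,
          Nat.abs_cast, abs_of_pos (hpos _)]
        exact mul_le_mul_of_nonneg_left ((gamma_le γ hdec _)) (Nat.cast_nonneg _)
    _ = 2^j * γ 0 := by
        rw [← Finset.sum_mul]
        congr 1
        rw [← Nat.cast_sum, Nat.sum_range_choose]
        push_cast
        ring

lemma dd_telescope (γ : ℕ → ℝ) (j k N : ℕ) :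
    ∑ m ∈ Finset.range N, dd γ (j+1) (k+m) = dd γ j k - dd γ j (k+N) := by
  have : ∀ m, dd γ (j+1) (k+m) = dd γ j (k+m) - dd γ j (k+(m+1)) := by
    intro m
    rw [dd_rec]
    norm_num [Nat.add_assoc]
  calc ∑ m ∈ Finset.range N, dd γ (j+1) (k+m)
      = ∑ m ∈ Finset.range N, (dd γ j (k+m) - dd γ j (k+(m+1))) :=
        Finset.sum_congr rfl (fun m _ => this m)
    _ = dd γ j (k+0) - dd γ j (k+N) := Finset.sum_range_sub' (fun m => dd γ j (k+m)) N
    _ = dd γ j k - dd γ j (k+N) := by norm_num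

lemma dd_step (γ : ℕ → ℝ) (hpos : ∀ k, 0 < γ k) (hdec : ∀ k, γ (k+1) ≤ γ k)
    (j : ℕ) (hj : 1 ≤ j) (h : ∀ k, 0 ≤ dd γ (j+1) k) :
    ∀ k, 0 ≤ dd γ j k := by
  intro k
  by_contra hneg
  push_neg at hneg
  obtain ⟨j', rfl⟩ : ∃ j', j = j' + 1 := ⟨j - 1, by omega⟩
  -- dd γ (j'+1) is decreasing in k starting from k
  have hmono : ∀ m, dd γ (j'+1) (k+m) ≤ dd γ (j'+1) k := by
    intro m
    induction m with
    | zero => simp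
    | succ m ih =>
      have h0 := h (k+m)
      rw [dd_rec] at h0
      have h2 : dd γ (j'+1) (k+(m+1)) ≤ dd γ (j'+1) (k+m) := by
        have e : k + (m+1) = (k+m)+1 := by omega
        rw [e]; linarith
      exact h2.trans ih
  have key : ∀ N : ℕ, -(2 * (2^j' * γ 0)) ≤ (N : ℝ) * dd γ (j'+1) k := by
    intro N
    have hsum : ∑ m ∈ Finset.range N, dd γ (j'+1) (k+m)
        = dd γ j' k - dd γ j' (k+N) := dd_telescope γ j' k N
    have hlow : -(2 * (2^j' * γ 0)) ≤ dd γ j' k - dd γ j' (k+N) := by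
      have b1 := abs_le.mp (dd_bound γ hpos hdec j' k)
      have b2 := abs_le.mp (dd_bound γ hpos hdec j' (k+N))
      linarith [b1.1, b2.2]
    have hup : ∑ m ∈ Finset.range N, dd γ (j'+1) (k+m) ≤ (N : ℝ) * dd γ (j'+1) k := by
      calc ∑ m ∈ Finset.range N, dd γ (j'+1) (k+m)
          ≤ ∑ m ∈ Finset.range N, dd γ (j'+1) k :=
            Finset.sum_le_sum (fun m _ => hmono m)
        _ = (N : ℝ) * dd γ (j'+1) k := by
            rw [Finset.sum_const, Finset.card_range, nsmul_eq_mul]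
    linarith [hsum ▸ hup]
  obtain ⟨N, hN⟩ := exists_nat_gt ((2 * (2^j' * γ 0)) / (-(dd γ (j'+1) k)))
  have hdpos : 0 < -(dd γ (j'+1) k) := by linarith
  have := key N
  have h3 : (2 * (2^j' * γ 0)) < (N : ℝ) * (-(dd γ (j'+1) k)) := by
    rwa [div_lt_iff₀ hdpos] at hN
  nlinarith

theorem stmt4 (γ : ℕ → ℝ) (hpos : ∀ k, 0 < γ k)
    (hdec : ∀ k, γ (k+1) ≤ γ k) (n : ℕ) (hn : 1 ≤ n)
    (hmono : ∀ k, 0 ≤ ∑ i ∈ Finset.range (n+1), (-1 : ℝ)^i * (n.choose i) * γ (k+i)) :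
    ∀ j, 1 ≤ j → j ≤ n →
      ∀ k, 0 ≤ ∑ i ∈ Finset.range (j+1), (-1 : ℝ)^i * (j.choose i) * γ (k+i) := by
  have main : ∀ i, 1 ≤ n - i → ∀ k, 0 ≤ dd γ (n - i) k := by
    intro i
    induction i with
    | zero => intro _ k; simpa [dd] using hmono k
    | succ i ih =>
      intro hi k
      have h1 : 1 ≤ n - i := by omega
      have h2 : n - i = (n - (i+1)) + 1 := by omega
      exact dd_step γ hpos hdec (n - (i+1)) hi (fun k => h2 ▸ ih h1 k) k
  intro j hj1 hjn k
  have heq : n - (n - j) = j := by omega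
  have hm := main (n - j) (by omega) k
  rw [heq, dd] at hm
  exact hm
end

section
/- If a, b : ℕ → ℝ are both n-hypermonotone (i.e., j-monotone for all 1 ≤ j ≤ n), then the termwise product sequence (a_k b_k) is n-hypermonotone, provided a and b are also nonnegative. -/
noncomputable def del (c : ℕ → ℝ) : ℕ → ℝ := fun k => c k - c (k+1)

lemma del_eq_neg_fwdDiff (c : ℕ → ℝ) : del c = -(fwdDiff 1 c) := by
  funext k; simp [del, fwdDiff]

lemma fwdDiff_iter_neg (c : ℕ → ℝ) (j : ℕ) :
    (fwdDiff 1)^[j] (-c) = -((fwdDiff 1)^[j] c) := by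
  have := fwdDiff_iter_const_smul (M := ℕ) (G := ℝ) (h := 1) (-1 : ℝ) c j
  simpa [neg_one_smul] using this

lemma del_iter_eq (c : ℕ → ℝ) (j : ℕ) (k : ℕ) :
    del^[j] c k = (-1:ℝ)^j * (fwdDiff 1)^[j] c k := by
  induction j generalizing c k with
  | zero => simp
  | succ j ih =>
    rw [Function.iterate_succ_apply, del_eq_neg_fwdDiff, ih,
      fwdDiff_iter_neg, ← Function.iterate_succ_apply]
    simp [pow_succ]

lemma del_iter_formula (c : ℕ → ℝ) (j : ℕ) (k : ℕ) :
    del^[j] c k = ∑ i ∈ Finset.range (j+1), (-1 : ℝ)^i * (j.choose i) * c (k+i) := by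
  rw [del_iter_eq, fwdDiff_iter_eq_sum_shift, Finset.mul_sum]
  refine Finset.sum_congr rfl fun i hi => ?_
  rw [Finset.mem_range] at hi
  have hij : i ≤ j := Nat.lt_succ_iff.mp hi
  have h1 : (-1:ℝ)^j * (-1:ℝ)^(j-i) = (-1:ℝ)^i := by
    rw [← pow_add]
    have h : j + (j - i) = i + 2*(j-i) := by omega
    rw [h, pow_add, pow_mul]
    simp
  have h2 : ((-1:ℤ)^(j-i) * (j.choose i) : ℤ) • c (k + i • 1) =
      (-1:ℝ)^(j-i) * (j.choose i) * c (k+i) := by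
    rw [zsmul_eq_mul, show k + i • 1 = k + i by simp]
    push_cast
    ring
  rw [h2, ← mul_assoc, ← mul_assoc, h1]

lemma del_iter_add (f g : ℕ → ℝ) (j k : ℕ) :
    del^[j] (fun k => f k + g k) k = del^[j] f k + del^[j] g k := by
  simp only [del_iter_formula, ← Finset.sum_add_distrib]
  exact Finset.sum_congr rfl fun i _ => by ring

lemma del_shift (c : ℕ → ℝ) : del (fun k => c (k+1)) = fun k => del c (k+1) := rfl

lemma del_iter_shift (c : ℕ → ℝ) (j k : ℕ) :
    del^[j] (fun k => c (k+1)) k = del^[j] c (k+1) := by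
  induction j generalizing c k with
  | zero => simp
  | succ j ih =>
    rw [Function.iterate_succ_apply, del_shift, ih, ← Function.iterate_succ_apply]

lemma del_prod (a b : ℕ → ℝ) :
    del (fun k => a k * b k) = fun k => del a k * b k + a (k+1) * del b k := by
  funext k; simp only [del]; ring

lemma key (j : ℕ) (a b : ℕ → ℝ)
    (ha : ∀ i ≤ j, ∀ k, 0 ≤ del^[i] a k) (hb : ∀ i ≤ j, ∀ k, 0 ≤ del^[i] b k) :
    ∀ k, 0 ≤ del^[j] (fun k => a k * b k) k := by
  induction j generalizing a b with
  | zero =>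
    intro k
    simpa using mul_nonneg (ha 0 le_rfl k) (hb 0 le_rfl k)
  | succ j ih =>
    intro k
    rw [Function.iterate_succ_apply, del_prod, del_iter_add]
    have h1 : 0 ≤ del^[j] (fun k => del a k * b k) k := by
      refine ih (del a) b (fun i hi k => ?_) (fun i hi k => hb i (by omega) k) k
      rw [← Function.iterate_succ_apply]
      exact ha (i+1) (by omega) k
    have h2 : 0 ≤ del^[j] (fun k => a (k+1) * del b k) k := by
      refine ih (fun k => a (k+1)) (del b) (fun i hi k => ?_) (fun i hi k => ?_) k
      · rw [del_iter_shift]; exact ha i (by omega) (k+1)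
      · rw [← Function.iterate_succ_apply]; exact hb (i+1) (by omega) k
    exact add_nonneg h1 h2

theorem stmt6 (a b : ℕ → ℝ) (n : ℕ)
    (ha0 : ∀ k, 0 ≤ a k) (hb0 : ∀ k, 0 ≤ b k)
    (ha : ∀ j, 1 ≤ j → j ≤ n →
      ∀ k, 0 ≤ ∑ i ∈ Finset.range (j+1), (-1 : ℝ)^i * (j.choose i) * a (k+i))
    (hb : ∀ j, 1 ≤ j → j ≤ n →
      ∀ k, 0 ≤ ∑ i ∈ Finset.range (j+1), (-1 : ℝ)^i * (j.choose i) * b (k+i)) :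
    ∀ j, 1 ≤ j → j ≤ n →
      ∀ k, 0 ≤ ∑ i ∈ Finset.range (j+1), (-1 : ℝ)^i * (j.choose i) * (a (k+i) * b (k+i)) := by
  intro j hj1 hjn k
  have hA : ∀ i ≤ j, ∀ k, 0 ≤ del^[i] a k := by
    intro i hi k
    rcases Nat.eq_zero_or_pos i with h | h
    · subst h; simpa using ha0 k
    · rw [del_iter_formula]; exact ha i h (by omega) k
  have hB : ∀ i ≤ j, ∀ k, 0 ≤ del^[i] b k := by
    intro i hi k
    rcases Nat.eq_zero_or_pos i with h | h
    · subst h; simpa using hb0 k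
    · rw [del_iter_formula]; exact hb i h (by omega) k
  have := key j a b hA hB k
  rwa [del_iter_formula] at this
end

section
/- If A is a Hermitian n×n matrix that is conditionally positive definite, then A has at most one negative eigenvalue (counting multiplicity). -/
/-!
Let `S` be the span of the eigenvectors of `A` with negative eigenvalue. Since these eigenvectors
are orthonormal, `v* A v < 0` for every nonzero `v ∈ S`, so `S` meets the hyperplane
`{v | ∑ i, v i = 0}`, on which the form is nonnegative, only in `0`. Hence `dim S ≤ 1`.
-/

open ComplexOrder Module Submodule RCLike
open scoped InnerProductSpace ComplexConjugate

section

variable {𝕜 E ι : Type*} [RCLike 𝕜] [NormedAddCommGroup E] [InnerProductSpace 𝕜 E] [Fintype ι]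
  {T : E →ₗ[𝕜] E} {e : ι → E} {μ : ι → ℝ}

lemma Orthonormal.re_inner_map_self_neg_of_mem_span (he : Orthonormal 𝕜 e)
    (hTe : ∀ k, T (e k) = (μ k : 𝕜) • e k) (hμ : ∀ k, μ k < 0) {v : E}
    (hv : v ∈ span 𝕜 (Set.range e)) (hv0 : v ≠ 0) : re ⟪v, T v⟫_𝕜 < 0 := by
  obtain ⟨c, rfl⟩ := mem_span_range_iff_exists_fun 𝕜 |>.mp hv
  obtain ⟨k, hk⟩ : ∃ k, c k ≠ 0 := by
    by_contra! h
    simp [h] at hv0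
  have hTv : T (∑ k, c k • e k) = ∑ k, (c k * μ k) • e k := by
    simp only [map_sum, map_smul, hTe, smul_smul]
  rw [hTv, he.inner_sum, map_sum]
  calc ∑ i, re (conj (c i) * (c i * μ i)) = ∑ i, μ i * ‖c i‖ ^ 2 := by
        refine Finset.sum_congr rfl fun i _ => ?_
        rw [← mul_assoc, RCLike.conj_mul, mul_comm]
        simp
    _ < ∑ _i : ι, (0 : ℝ) :=
        Finset.sum_lt_sum (fun i _ => mul_nonpos_of_nonpos_of_nonneg (hμ i).le (by positivity))
          ⟨k, Finset.mem_univ _, mul_neg_of_neg_of_pos (hμ k) (by positivity)⟩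
    _ = 0 := Finset.sum_const_zero

lemma Orthonormal.card_le_finrank_of_re_inner_map_self_nonneg [FiniteDimensional 𝕜 E]
    (he : Orthonormal 𝕜 e) (hTe : ∀ k, T (e k) = (μ k : 𝕜) • e k) (hμ : ∀ k, μ k < 0)
    (K : Submodule 𝕜 E) (hK : ∀ v ∈ Kᗮ, 0 ≤ re ⟪v, T v⟫_𝕜) :
    Fintype.card ι ≤ finrank 𝕜 K := by
  have hdisj : Disjoint (span 𝕜 (Set.range e)) Kᗮ := by
    refine disjoint_def.mpr fun v hv hvK => ?_
    by_contra hv0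
    exact (hK v hvK).not_gt (he.re_inner_map_self_neg_of_mem_span hTe hμ hv hv0)
  have hle := finrank_add_finrank_le_of_disjoint hdisj
  rw [finrank_span_eq_card he.linearIndependent] at hle
  have := K.finrank_add_finrank_orthogonal
  omega

end

lemma Matrix.inner_toLpLin_self {𝕜 n : Type*} [RCLike 𝕜] [Fintype n] [DecidableEq n]
    (A : Matrix n n 𝕜) (v : EuclideanSpace 𝕜 n) :
    ⟪v, toLpLin 2 2 A v⟫_𝕜 = ∑ i, ∑ j, conj (v i) * A i j * v j := by
  simp [EuclideanSpace.inner_eq_star_dotProduct, Matrix.toLpLin_apply, dotProduct, Matrix.mulVec,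
    Finset.mul_sum, mul_comm, mul_left_comm, mul_assoc]

lemma Matrix.IsHermitian.toLpLin_eigenvectorBasis {𝕜 n : Type*} [RCLike 𝕜] [Fintype n]
    [DecidableEq n] {A : Matrix n n 𝕜} (hA : A.IsHermitian) (k : n) :
    toLpLin 2 2 A (hA.eigenvectorBasis k) = (hA.eigenvalues k : 𝕜) • hA.eigenvectorBasis k := by
  ext i
  simp [Matrix.toLpLin_apply, hA.mulVec_eigenvectorBasis]

lemma EuclideanSpace.sum_eq_zero_of_mem_orthogonal_one {𝕜 n : Type*} [RCLike 𝕜] [Fintype n]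
    {v : EuclideanSpace 𝕜 n} (hv : v ∈ (𝕜 ∙ WithLp.toLp 2 (fun _ => (1 : 𝕜)))ᗮ) :
    ∑ i, v i = 0 := by
  rw [mem_orthogonal_singleton_iff_inner_right] at hv
  simpa [EuclideanSpace.inner_eq_star_dotProduct, dotProduct] using hv

theorem stmt9 (n : ℕ) (A : Matrix (Fin n) (Fin n) ℂ) (hA : A.IsHermitian)
    (hcpd : ∀ v : Fin n → ℂ, (∑ i, v i) = 0 →
        0 ≤ ∑ i, ∑ j, (starRingEnd ℂ) (v i) * A i j * v j) :
    (Finset.univ.filter (fun i => hA.eigenvalues i < 0)).card ≤ 1 := by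
  let e : {i // hA.eigenvalues i < 0} → EuclideanSpace ℂ (Fin n) :=
    fun k => hA.eigenvectorBasis k
  have he : Orthonormal ℂ e := hA.eigenvectorBasis.orthonormal.comp _ Subtype.val_injective
  have hK : ∀ v ∈ (ℂ ∙ WithLp.toLp 2 (fun _ => (1 : ℂ)))ᗮ,
      0 ≤ re ⟪v, Matrix.toLpLin 2 2 A v⟫_ℂ := fun v hv => by
    have := hcpd v (EuclideanSpace.sum_eq_zero_of_mem_orthogonal_one hv)
    rw [← Matrix.inner_toLpLin_self] at this
    exact (nonneg_iff.mp this).1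
  have hcard := he.card_le_finrank_of_re_inner_map_self_nonneg
    (fun k => hA.toLpLin_eigenvectorBasis k) (fun k => k.2) _ hK
  rw [Fintype.card_subtype] at hcard
  exact hcard.trans ((finrank_span_le_card _).trans (by simp))
end

section
/- If A is a nonzero Hermitian n×n matrix with all entries real and non-positive, and A is conditionally positive definite, then A has exactly one negative eigenvalue. -/
/-!
The all-ones vector gives `1ᴴ A 1 = ∑ i j, A i j < 0`, so `A` is not positive semidefinite and
has a negative eigenvalue. If two orthonormal eigenvectors both had negative eigenvalues, the
plane they span would be negative definite; but a plane always meets the hyperplane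
`∑ i, v i = 0`, on which the form is nonnegative.
-/

open ComplexOrder Matrix

lemma exists_ne_zero_mul_add_mul_eq_zero {R : Type*} [CommRing R] [Nontrivial R] (s t : R) :
    ∃ a b : R, (a ≠ 0 ∨ b ≠ 0) ∧ a * s + b * t = 0 := by
  by_cases hs : s = 0
  · exact ⟨1, 0, .inl one_ne_zero, by simp [hs]⟩
  · exact ⟨t, -s, .inr (neg_ne_zero.mpr hs), by ring⟩

namespace Matrix

variable {ι : Type*} [Fintype ι]

lemma not_posSemidef_of_nonpos_of_ne_zero {R : Type*} [Ring R] [PartialOrder R] [StarRing R]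
    [IsOrderedAddMonoid R] {A : Matrix ι ι R} (hnonpos : ∀ i j, A i j ≤ 0) (hne : A ≠ 0) :
    ¬ A.PosSemidef := by
  intro hpsd
  obtain ⟨i, j, hij⟩ : ∃ i j, A i j ≠ 0 := by
    by_contra! h
    exact hne (Matrix.ext h)
  have hsum_neg : ∑ p : ι × ι, A p.1 p.2 < 0 :=
    Finset.sum_neg' (fun p _ => hnonpos p.1 p.2)
      ⟨(i, j), Finset.mem_univ _, (hnonpos i j).lt_of_ne hij⟩
  have hsum_nonneg := hpsd.dotProduct_mulVec_nonneg 1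
  rw [star_one, one_dotProduct] at hsum_nonneg
  simp only [mulVec, dotProduct, Pi.one_apply, mul_one] at hsum_nonneg
  rw [Fintype.sum_prod_type] at hsum_neg
  exact (hsum_nonneg.trans_lt hsum_neg).false

lemma star_smul_add_smul_dotProduct_mulVec {R : Type*} [CommRing R] [StarRing R]
    {A : Matrix ι ι R} {u w : ι → R} {μ ν : R} (hu : A *ᵥ u = μ • u) (hw : A *ᵥ w = ν • w)
    (huu : star u ⬝ᵥ u = 1) (hww : star w ⬝ᵥ w = 1) (huw : star u ⬝ᵥ w = 0)
    (hwu : star w ⬝ᵥ u = 0) (a b : R) :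
    star (a • u + b • w) ⬝ᵥ A *ᵥ (a • u + b • w) = star a * a * μ + star b * b * ν := by
  simp only [mulVec_add, mulVec_smul, hu, hw, star_add, star_smul, add_dotProduct,
    dotProduct_add, smul_dotProduct, dotProduct_smul, huu, hww, huw, hwu, smul_eq_mul]
  ring

namespace IsHermitian

variable [DecidableEq ι] {𝕜 : Type*} [RCLike 𝕜] {A : Matrix ι ι 𝕜}

lemma exists_eigenvalues_neg_of_not_posSemidef (hA : A.IsHermitian)
    (h : ¬ A.PosSemidef) : ∃ i, hA.eigenvalues i < 0 := by
  simpa [hA.posSemidef_iff_eigenvalues_nonneg, Pi.le_def] using h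

lemma star_eigenvectorBasis_dotProduct (hA : A.IsHermitian) (k l : ι) :
    star ⇑(hA.eigenvectorBasis k) ⬝ᵥ ⇑(hA.eigenvectorBasis l) = if k = l then 1 else 0 := by
  rw [dotProduct_comm, ← EuclideanSpace.inner_eq_star_dotProduct]
  exact orthonormal_iff_ite.mp hA.eigenvectorBasis.orthonormal k l

lemma eq_of_eigenvalues_neg_of_nonneg_on_hyperplane (hA : A.IsHermitian)
    {w : ι → 𝕜} (hw : ∀ v, w ⬝ᵥ v = 0 → 0 ≤ star v ⬝ᵥ A *ᵥ v) {k l : ι}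
    (hk : hA.eigenvalues k < 0) (hl : hA.eigenvalues l < 0) : k = l := by
  by_contra hkl
  set u := ⇑(hA.eigenvectorBasis k)
  set u' := ⇑(hA.eigenvectorBasis l)
  have heig : ∀ j, A *ᵥ ⇑(hA.eigenvectorBasis j) =
      (hA.eigenvalues j : 𝕜) • ⇑(hA.eigenvectorBasis j) := fun j => by
    rw [hA.mulVec_eigenvectorBasis, RCLike.real_smul_eq_coe_smul (K := 𝕜)]
  obtain ⟨a, b, hab, hker⟩ := exists_ne_zero_mul_add_mul_eq_zero (w ⬝ᵥ u) (w ⬝ᵥ u')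
  have hform := hw (a • u + b • u') (by simpa [dotProduct_add, dotProduct_smul] using hker)
  have horth := hA.star_eigenvectorBasis_dotProduct
  rw [star_smul_add_smul_dotProduct_mulVec (heig k) (heig l) (by simp [horth])
    (by simp [horth]) (by simp [horth, hkl]) (by simp [horth, Ne.symm hkl]),
    RCLike.star_def, RCLike.conj_mul, RCLike.conj_mul] at hform
  norm_cast at hform
  have hka := mul_nonpos_of_nonneg_of_nonpos (sq_nonneg ‖a‖) hk.le
  have hlb := mul_nonpos_of_nonneg_of_nonpos (sq_nonneg ‖b‖) hl.le
  rcases hab with ha | hb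
  · linarith [mul_neg_of_pos_of_neg (by positivity : 0 < ‖a‖ ^ 2) hk]
  · linarith [mul_neg_of_pos_of_neg (by positivity : 0 < ‖b‖ ^ 2) hl]

end IsHermitian

end Matrix

theorem stmt10 (n : ℕ) (A : Matrix (Fin n) (Fin n) ℂ) (hA : A.IsHermitian)
    (hne : A ≠ 0)
    (hentries : ∀ i j, (A i j).im = 0 ∧ (A i j).re ≤ 0)
    (hcpd : ∀ v : Fin n → ℂ, (∑ i, v i) = 0 →
        0 ≤ ∑ i, ∑ j, (starRingEnd ℂ) (v i) * A i j * v j) :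
    (Finset.univ.filter (fun i => hA.eigenvalues i < 0)).card = 1 := by
  have hnonpos : ∀ i j, A i j ≤ 0 := fun i j =>
    Complex.le_def.mpr ⟨(hentries i j).2, (hentries i j).1⟩
  have hform : ∀ v, 1 ⬝ᵥ v = 0 → 0 ≤ star v ⬝ᵥ A *ᵥ v := fun v hv => by
    rw [one_dotProduct] at hv
    simpa [dotProduct, mulVec, Finset.mul_sum, mul_assoc] using hcpd v hv
  obtain ⟨k, hk⟩ := hA.exists_eigenvalues_neg_of_not_posSemidef
    (not_posSemidef_of_nonpos_of_ne_zero hnonpos hne)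
  rw [Finset.card_eq_one]
  refine ⟨k, Finset.eq_singleton_iff_unique_mem.mpr ⟨by simpa using hk, fun l hl => ?_⟩⟩
  exact hA.eq_of_eigenvalues_neg_of_nonneg_on_hyperplane hform (by simpa using hl) hk
end

section
/- For a Hermitian (k+1)×(k+1) matrix A (k ≥ 1), A is conditionally positive definite if and only if the k×k matrix B with entries B_{ij} = a_{ij} - a_{i,j+1} - a_{i+1,j} + a_{i+1,j+1} is positive semidefinite. -/
open ComplexOrder

private def snocz {k : ℕ} (u : Fin k → ℂ) : Fin (k+1) → ℂ := Fin.snoc u 0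

private def consz {k : ℕ} (u : Fin k → ℂ) : Fin (k+1) → ℂ := Fin.cons 0 u

private lemma snocz_castSucc {k : ℕ} (u : Fin k → ℂ) (i : Fin k) :
    snocz u i.castSucc = u i := by simp [snocz]

private lemma snocz_last {k : ℕ} (u : Fin k → ℂ) :
    snocz u (Fin.last k) = 0 := by simp [snocz]

private lemma consz_zero {k : ℕ} (u : Fin k → ℂ) : consz u 0 = 0 := by simp [consz]

private lemma consz_succ {k : ℕ} (u : Fin k → ℂ) (i : Fin k) :
    consz u i.succ = u i := by simp [consz]

private lemma sum_diff_mul {k : ℕ} (u : Fin k → ℂ) (f : Fin (k+1) → ℂ) :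
    ∑ i, (snocz u i - consz u i) * f i
      = ∑ i : Fin k, u i * (f i.castSucc - f i.succ) := by
  simp only [sub_mul, mul_sub, Finset.sum_sub_distrib]
  congr 1
  · rw [Fin.sum_univ_castSucc]
    simp [snocz_castSucc, snocz_last]
  · rw [Fin.sum_univ_succ]
    simp [consz_zero, consz_succ]

private lemma sum_mul_diff {k : ℕ} (u : Fin k → ℂ) (f : Fin (k+1) → ℂ) :
    ∑ j, f j * (snocz u j - consz u j)
      = ∑ j : Fin k, (f j.castSucc - f j.succ) * u j := by
  simp only [mul_sub, sub_mul, Finset.sum_sub_distrib]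
  congr 1
  · rw [Fin.sum_univ_castSucc]
    simp [snocz_castSucc, snocz_last]
  · rw [Fin.sum_univ_succ]
    simp [consz_zero, consz_succ]

private lemma quad_eq {k : ℕ} (A : Matrix (Fin (k+1)) (Fin (k+1)) ℂ)
    (B : Matrix (Fin k) (Fin k) ℂ)
    (hB : ∀ i j : Fin k, B i j =
      A i.castSucc j.castSucc - A i.castSucc j.succ - A i.succ j.castSucc + A i.succ j.succ)
    (w : Fin k → ℂ) :
    ∑ i, ∑ j, (starRingEnd ℂ) (snocz w i - consz w i) * A i j * (snocz w j - consz w j)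
      = ∑ i, ∑ j, (starRingEnd ℂ) (w i) * B i j * w j := by
  set v : Fin (k+1) → ℂ := fun i => snocz w i - consz w i with hv
  set u : Fin k → ℂ := fun t => (starRingEnd ℂ) (w t) with hu
  have hsc : ∀ i, (starRingEnd ℂ) (snocz w i) = snocz u i := by
    intro i
    induction i using Fin.lastCases with
    | last => simp [snocz_last]
    | cast j => simp [hu, snocz_castSucc]
  have hcc : ∀ i, (starRingEnd ℂ) (consz w i) = consz u i := by
    intro i
    induction i using Fin.cases with
    | zero => simp [consz_zero]
    | succ j => simp [hu, consz_succ]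
  have hconj : ∀ i, (starRingEnd ℂ) (v i) = snocz u i - consz u i := by
    intro i
    rw [hv]
    simp only [map_sub, hsc, hcc]
  have inner : ∀ i : Fin k,
      (∑ j, A i.castSucc j * v j) - (∑ j, A i.succ j * v j)
        = ∑ j, B i j * w j := by
    intro i
    rw [← Finset.sum_sub_distrib]
    rw [show (∑ j, (A i.castSucc j * v j - A i.succ j * v j))
        = ∑ j, (fun p => A i.castSucc p - A i.succ p) j * (snocz w j - consz w j) from
      Finset.sum_congr rfl fun j _ => by simp only [hv]; ring]
    rw [sum_mul_diff w (fun p => A i.castSucc p - A i.succ p)]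
    refine Finset.sum_congr rfl fun j _ => ?_
    rw [hB]
    ring
  calc ∑ i, ∑ j, (starRingEnd ℂ) (v i) * A i j * v j
      = ∑ i, (starRingEnd ℂ) (v i) * ∑ j, A i j * v j := by
        simp only [Finset.mul_sum, mul_assoc]
    _ = ∑ i, (snocz u i - consz u i) * ∑ j, A i j * v j := by
        refine Finset.sum_congr rfl fun i _ => ?_
        rw [hconj]
    _ = ∑ i : Fin k, u i * ((∑ j, A i.castSucc j * v j) - (∑ j, A i.succ j * v j)) := by
        rw [sum_diff_mul u (fun i => ∑ j, A i j * v j)]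
    _ = ∑ i : Fin k, (starRingEnd ℂ) (w i) * ∑ j, B i j * w j := by
        refine Finset.sum_congr rfl fun i _ => ?_
        rw [inner, hu]
    _ = ∑ i, ∑ j, (starRingEnd ℂ) (w i) * B i j * w j := by
        simp only [Finset.mul_sum, mul_assoc]

theorem stmt11 (k : ℕ) (hk : 1 ≤ k)
    (A : Matrix (Fin (k+1)) (Fin (k+1)) ℂ) (hA : A.IsHermitian)
    (B : Matrix (Fin k) (Fin k) ℂ)
    (hB : ∀ i j : Fin k, B i j =
      A i.castSucc j.castSucc - A i.castSucc j.succ - A i.succ j.castSucc + A i.succ j.succ) :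
    (∀ v : Fin (k+1) → ℂ, (∑ i, v i) = 0 →
        0 ≤ ∑ i, ∑ j, (starRingEnd ℂ) (v i) * A i j * v j)
      ↔ (∀ w : Fin k → ℂ, 0 ≤ ∑ i, ∑ j, (starRingEnd ℂ) (w i) * B i j * w j) := by
  haveI : NeZero k := ⟨by omega⟩
  constructor
  · intro hCPD w
    have hsum : ∑ i, (snocz w i - consz w i) = 0 := by
      rw [Finset.sum_sub_distrib, Fin.sum_univ_castSucc, Fin.sum_univ_succ]
      simp [snocz_castSucc, snocz_last, consz_zero, consz_succ]
    have h := hCPD (fun i => snocz w i - consz w i) hsum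
    rwa [quad_eq A B hB w] at h
  · intro hPSD v hv0
    set vN : ℕ → ℂ := fun m => if h : m < k + 1 then v ⟨m, h⟩ else 0 with hvN
    set w : Fin k → ℂ := fun i => ∑ m ∈ Finset.range (i.val + 1), vN m with hw
    have hvNval : ∀ i : Fin (k+1), vN i.val = v i := by
      intro i
      simp only [hvN, i.isLt, dif_pos, Fin.eta]
    have hsnoc : ∀ i : Fin (k+1),
        snocz w i = ∑ m ∈ Finset.range (i.val + 1), vN m := by
      intro i
      induction i using Fin.lastCases with
      | last =>
        have : ∑ m ∈ Finset.range (k + 1), vN m = ∑ i : Fin (k+1), v i := by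
          rw [← Fin.sum_univ_eq_sum_range]
          exact Finset.sum_congr rfl fun i _ => hvNval i
        simp [snocz_last, this, hv0]
      | cast j =>
        simp [snocz_castSucc, hw]
    have hcons : ∀ i : Fin (k+1),
        consz w i = ∑ m ∈ Finset.range i.val, vN m := by
      intro i
      induction i using Fin.cases with
      | zero => simp [consz_zero]
      | succ j => simp [consz_succ, hw]
    have hveq : v = fun i => snocz w i - consz w i := by
      funext i
      rw [hsnoc, hcons, Finset.sum_range_succ]
      simp [hvNval]
    rw [show (∑ i, ∑ j, (starRingEnd ℂ) (v i) * A i j * v j)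
        = ∑ i, ∑ j, (starRingEnd ℂ) (snocz w i - consz w i) * A i j *
            (snocz w j - consz w j) from by rw [hveq],
      quad_eq A B hB w]
    exact hPSD w
end

section
/- If a Hermitian k×k matrix A is conditionally positive definite, then for every p > 0 the matrix with entries e^{p a_{ij}} (entrywise exponential) is positive semidefinite. -/
/-!
Fix an index `e` and let `P x = x - (∑ i, x i) • eₑ`, a projection onto the hyperplane
`∑ i, x i = 0`. For a conditionally positive semidefinite `A` the matrix `B = Pᵀ A P`, with entries
`A i j - A e j - A i e + A e e`, is positive semidefinite. By the Schur product theorem every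
entrywise power of `B` is positive semidefinite, hence so is its entrywise exponential, a sum of
such powers with positive coefficients. Finally `exp (A i j) = d i * exp (B i j) * d j` with
`d i = exp (A i e - A e e / 2)`, and a congruence by a diagonal matrix preserves semidefiniteness.
-/

open Finset
open scoped Nat ComplexOrder

namespace Matrix

variable {ι : Type*} [Fintype ι]

theorem PosSemidef.map_pow {𝕜 : Type*} [RCLike 𝕜] {C : Matrix ι ι 𝕜} (hC : C.PosSemidef)
    (n : ℕ) : (C.map (· ^ n)).PosSemidef := by
  induction n with
  | zero =>
    have hones : C.map (· ^ 0) = vecMulVec (fun _ => 1) (star fun _ => 1) := by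
      ext i j
      simp [vecMulVec_apply]
    exact hones ▸ posSemidef_vecMulVec_self_star _
  | succ n ih =>
    have hsucc : C.map (· ^ (n + 1)) = C.map (· ^ n) ⊙ C := by
      ext i j
      simp [pow_succ]
    exact hsucc ▸ ih.hadamard hC

theorem PosSemidef.map_exp {C : Matrix ι ι ℝ} (hC : C.PosSemidef) :
    (C.map Real.exp).PosSemidef := by
  refine posSemidef_iff_dotProduct_mulVec.mpr ⟨?_, fun x => ?_⟩
  · exact isHermitian_iff_isSymm.mpr ((isHermitian_iff_isSymm.mp hC.isHermitian).map _)
  have hentry (i j : ι) :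
      HasSum (fun n : ℕ => (n !⁻¹ : ℝ) * C i j ^ n) (Real.exp (C i j)) := by
    simpa [Real.exp_eq_exp_ℝ] using NormedSpace.exp_series_hasSum_exp' (𝕂 := ℝ) (C i j)
  have hseries : HasSum (fun n : ℕ => star x ⬝ᵥ ((n !⁻¹ : ℝ) • C.map (· ^ n)) *ᵥ x)
      (star x ⬝ᵥ (C.map Real.exp) *ᵥ x) := by
    simp only [dotProduct, mulVec, map_apply, smul_apply, smul_eq_mul]
    exact hasSum_sum fun i _ => (hasSum_sum fun j _ => (hentry i j).mul_right (x j)).mul_left _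
  exact hseries.nonneg fun n => ((hC.map_pow n).smul (by positivity)).dotProduct_mulVec_nonneg x

/-- In the literature this is called *conditionally positive definite*. -/
def CondPosSemidef (A : Matrix ι ι ℝ) : Prop :=
  ∀ x : ι → ℝ, ∑ i, x i = 0 → 0 ≤ x ⬝ᵥ A *ᵥ x

theorem CondPosSemidef.smul {A : Matrix ι ι ℝ} (hA : A.CondPosSemidef) {p : ℝ} (hp : 0 ≤ p) :
    (p • A).CondPosSemidef := fun x hx => by
  simpa [smul_mulVec, dotProduct_smul] using mul_nonneg hp (hA x hx)

section projSumZero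

variable [DecidableEq ι]

def projSumZero (e : ι) : Matrix ι ι ℝ := 1 - vecMulVec (Pi.single e 1) 1

theorem projSumZero_mulVec (e : ι) (x : ι → ℝ) :
    projSumZero e *ᵥ x = x - Pi.single e (∑ i, x i) := by
  ext i
  simp [projSumZero, mulVec, dotProduct, one_apply, sub_mul, sum_sub_distrib, Pi.single_apply]

theorem transpose_projSumZero_mul_mul_projSumZero_apply (A : Matrix ι ι ℝ) (e i j : ι) :
    ((projSumZero e)ᵀ * A * projSumZero e) i j = A i j - A e j - A i e + A e e := by
  simp only [projSumZero, vecMulVec_one, transpose_sub, transpose_one, transpose_replicateCol,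
    sub_mul, one_mul, mul_apply, sub_apply, replicateRow_apply, Pi.single_apply, ite_mul, zero_mul,
    sum_ite_eq', mem_univ, ↓reduceIte, one_apply, replicateCol_apply, mul_sub, mul_ite, mul_one,
    mul_zero, sum_sub_distrib]
  ring

theorem CondPosSemidef.posSemidef_transpose_projSumZero_mul_mul {A : Matrix ι ι ℝ}
    (hsymm : A.IsSymm) (hA : A.CondPosSemidef) (e : ι) :
    ((projSumZero e)ᵀ * A * projSumZero e).PosSemidef := by
  refine posSemidef_iff_dotProduct_mulVec.mpr ⟨?_, fun x => ?_⟩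
  · exact isHermitian_iff_isSymm.mpr <| by
      simp [IsSymm, transpose_mul, hsymm.eq, Matrix.mul_assoc]
  · have hsum : ∑ i, (projSumZero e *ᵥ x) i = 0 := by
      simp [projSumZero_mulVec]
    rw [star_trivial, ← mulVec_mulVec, ← mulVec_mulVec, dotProduct_mulVec, vecMul_transpose]
    exact hA _ hsum

end projSumZero

theorem CondPosSemidef.posSemidef_map_exp {A : Matrix ι ι ℝ} (hsymm : A.IsSymm)
    (hA : A.CondPosSemidef) : (A.map Real.exp).PosSemidef := by
  classical
  rcases isEmpty_or_nonempty ι with hι | ⟨⟨e⟩⟩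
  · rw [Subsingleton.elim (A.map Real.exp) 0]
    exact .zero
  set d : ι → ℝ := fun i => Real.exp (A i e - A e e / 2)
  have hfactor : A.map Real.exp =
      (diagonal d)ᴴ * ((projSumZero e)ᵀ * A * projSumZero e).map Real.exp * diagonal d := by
    ext i j
    simp only [map_apply, diagonal_conjTranspose, star_trivial, diagonal_mul, mul_diagonal,
      transpose_projSumZero_mul_mul_projSumZero_apply, d, ← Real.exp_add, hsymm.apply j e]
    congr 1
    ring
  rw [hfactor]
  exact (hA.posSemidef_transpose_projSumZero_mul_mul hsymm e).map_exp.conjTranspose_mul_mul_same _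

end Matrix

theorem stmt13 (k : ℕ) (A : Matrix (Fin k) (Fin k) ℝ) (hsymm : A.IsSymm)
    (hcpd : ∀ x : Fin k → ℝ, (∑ i, x i) = 0 → 0 ≤ ∑ i, ∑ j, x i * A i j * x j)
    (p : ℝ) (hp : 0 < p) :
    ∀ x : Fin k → ℝ, 0 ≤ ∑ i, ∑ j, x i * Real.exp (p * A i j) * x j := by
  intro x
  have hquad (M : Matrix (Fin k) (Fin k) ℝ) (y : Fin k → ℝ) :
      y ⬝ᵥ M.mulVec y = ∑ i, ∑ j, y i * M i j * y j :=
    (Matrix.toBilin'_apply' M y y).symm.trans (Matrix.toBilin'_apply M y y)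
  have hA : A.CondPosSemidef := fun y hy => hquad A y ▸ hcpd y hy
  have hexp := ((hA.smul hp.le).posSemidef_map_exp (hsymm.smul p)).dotProduct_mulVec_nonneg x
  simpa [hquad] using hexp
end

section
/- For a Hankel matrix A with entries a_{ij} = w_{i+j} built from a sequence w, conditional positive definiteness of the (k+1)×(k+1) matrix (w_{i+j})_{i,j=0}^{k} is equivalent to positive semidefiniteness of the k×k Hankel matrix of second differences ((∇^2 w)_{i+j})_{i,j=0}^{k-1}, where (∇^2 w)_n = w_n - 2 w_{n+1} + w_{n+2}. -/
/-!
Put `x_i = Y_{i-1} - Y_i` with `Y_{-1} = Y_k = 0`. This is a bijection between `ℝ^k` and the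
zero-sum vectors of `ℝ^{k+1}` (its inverse takes negated partial sums), and summing by parts once
in each index turns the Hankel form of `w` at `x` into the Hankel form of `∇²w` at `Y`.
-/

open Finset

variable {R : Type*} [CommRing R]

def negDiff (Y : ℕ → R) : ℕ → R
  | 0 => -Y 0
  | i + 1 => Y i - Y (i + 1)

def secondDiff (w : ℕ → R) (n : ℕ) : R := w n - 2 * w (n + 1) + w (n + 2)

lemma sum_range_succ_negDiff_mul {k : ℕ} {Y : ℕ → R} (hY : Y k = 0) (f : ℕ → R) :
    ∑ i ∈ range (k + 1), negDiff Y i * f i = ∑ a ∈ range k, Y a * (f (a + 1) - f a) := by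
  have h := sum_range_succ' (fun i => Y i * f i) k
  rw [sum_range_succ, hY] at h
  simp only [sum_range_succ', negDiff, sub_mul, mul_sub, sum_sub_distrib]
  linear_combination h

lemma sum_range_succ_negDiff {k : ℕ} {Y : ℕ → R} (hY : Y k = 0) :
    ∑ i ∈ range (k + 1), negDiff Y i = 0 := by
  simpa using sum_range_succ_negDiff_mul hY 1

lemma negDiff_neg_partialSum (x : ℕ → R) :
    negDiff (fun a => -∑ j ∈ range (a + 1), x j) = x := by
  funext i
  cases i <;> simp [negDiff, sum_range_succ _ (_ + 1)]

lemma hankelForm_negDiff {k : ℕ} {Y : ℕ → R} (hY : Y k = 0) (w : ℕ → R) :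
    ∑ i ∈ range (k + 1), ∑ j ∈ range (k + 1), negDiff Y i * w (i + j) * negDiff Y j
      = ∑ a ∈ range k, ∑ b ∈ range k, Y a * secondDiff w (a + b) * Y b := by
  have inner (i : ℕ) : ∑ j ∈ range (k + 1), negDiff Y i * w (i + j) * negDiff Y j
      = negDiff Y i * ∑ b ∈ range k, Y b * (w (i + b + 1) - w (i + b)) := by
    have by_parts := sum_range_succ_negDiff_mul hY (fun j => w (i + j))
    simp only [← add_assoc] at by_parts
    rw [← by_parts, mul_sum]
    exact sum_congr rfl fun j _ => by ring
  calc _ = ∑ i ∈ range (k + 1), negDiff Y i * ∑ b ∈ range k, Y b * (w (i + b + 1) - w (i + b)) :=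
        sum_congr rfl fun i _ => inner i
    _ = ∑ a ∈ range k, Y a * (∑ b ∈ range k, Y b * (w (a + 1 + b + 1) - w (a + 1 + b))
          - ∑ b ∈ range k, Y b * (w (a + b + 1) - w (a + b))) :=
        sum_range_succ_negDiff_mul hY _
    _ = _ := by
      refine sum_congr rfl fun a _ => ?_
      rw [← sum_sub_distrib, mul_sum]
      refine sum_congr rfl fun b _ => ?_
      rw [secondDiff, show a + 1 + b = a + b + 1 by ring]
      ring

theorem hankel_condPosDef_iff_secondDiff_posSemidef [LE R] (w : ℕ → R) (k : ℕ) :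
    (∀ x : ℕ → R, ∑ i ∈ range (k + 1), x i = 0 →
        0 ≤ ∑ i ∈ range (k + 1), ∑ j ∈ range (k + 1), x i * w (i + j) * x j)
      ↔ ∀ Y : ℕ → R, 0 ≤ ∑ a ∈ range k, ∑ b ∈ range k, Y a * secondDiff w (a + b) * Y b := by
  constructor
  · intro h Y
    set Y' := Function.update Y k 0
    have hY' : ∀ a ∈ range k, Y' a = Y a := fun a ha =>
      Function.update_of_ne (mem_range.mp ha).ne _ _
    have hForm := h (negDiff Y') (sum_range_succ_negDiff (by simp [Y']))
    rwa [hankelForm_negDiff (by simp [Y']),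
      sum_congr rfl fun a ha => sum_congr rfl fun b hb => by rw [hY' a ha, hY' b hb]] at hForm
  · intro h x hx
    have hY : -∑ j ∈ range (k + 1), x j = 0 := by rw [hx, neg_zero]
    rw [← negDiff_neg_partialSum x, hankelForm_negDiff hY]
    exact h _

lemma Fin.forall_fun_iff_forall_nat {α : Type*} [Zero α] {n : ℕ} (Q : (Fin n → α) → Prop) :
    (∀ x, Q x) ↔ ∀ X : ℕ → α, Q fun i => X i :=
  ⟨fun h X => h _, fun h x => by simpa using h fun i => if hi : i < n then x ⟨i, hi⟩ else 0⟩

theorem stmt14_general (w : ℕ → ℝ) (k : ℕ) :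
    (∀ x : Fin (k+1) → ℝ, (∑ i, x i) = 0 →
        0 ≤ ∑ i : Fin (k+1), ∑ j : Fin (k+1), x i * w (i + j) * x j)
      ↔ (∀ y : Fin k → ℝ,
        0 ≤ ∑ i : Fin k, ∑ j : Fin k,
              y i * (w (i + j) - 2 * w (i + j + 1) + w (i + j + 2)) * y j) := by
  rw [Fin.forall_fun_iff_forall_nat, Fin.forall_fun_iff_forall_nat (n := k)]
  simpa only [sum_range, secondDiff] using hankel_condPosDef_iff_secondDiff_posSemidef w k

theorem stmt14 (w : ℕ → ℝ) (k : ℕ) (hk : 1 ≤ k) :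
    (∀ x : Fin (k+1) → ℝ, (∑ i, x i) = 0 →
        0 ≤ ∑ i : Fin (k+1), ∑ j : Fin (k+1), x i * w (i + j) * x j)
      ↔ (∀ y : Fin k → ℝ,
        0 ≤ ∑ i : Fin k, ∑ j : Fin k,
              y i * (w (i + j) - 2 * w (i + j + 1) + w (i + j + 2)) * y j) :=
  stmt14_general w k
end

section
/- For the Agler moment sequence γ^{(j)}_n = (j-1)!·n!/(n+j-1)! with j ≥ 2 and any m ≥ 0, the iterated difference satisfies (∇^{2m} γ^{(j)})_n = ((j-1)/(j+2m-1))·γ^{(j+2m)}_n for all n. -/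
/-- Forward difference operator on real sequences. -/
def fdiff (c : ℕ → ℝ) : ℕ → ℝ := fun k => c k - c (k+1)

/-- Moments of the `j`-th Agler shift: `γ^{(j)}_n = (j-1)!·n!/(n+j-1)!`. -/
noncomputable def aglerMoment (j n : ℕ) : ℝ :=
  ((j-1).factorial * n.factorial : ℝ) / ((n+j-1).factorial : ℝ)

lemma agler_eq (i n : ℕ) :
    aglerMoment (i+2) n = ((i+1).factorial * n.factorial : ℝ) / ((n+i+1).factorial : ℝ) := by
  unfold aglerMoment
  have h1 : i+2-1 = i+1 := by omega
  have h2 : n+(i+2)-1 = n+i+1 := by omega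
  rw [h1, h2]

lemma fdiff_step (i n : ℕ) :
    fdiff (aglerMoment (i+2)) n = (((i:ℝ)+1)/((i:ℝ)+2)) * aglerMoment (i+3) n := by
  have h3 : i+3 = (i+1)+2 := by ring
  rw [h3]
  simp only [fdiff, agler_eq]
  have e1 : n+(i+1)+1 = (n+i+1)+1 := by ring
  have e2 : n+1+i+1 = (n+i+1)+1 := by ring
  rw [e1, e2]
  have f1 : ((((n+i+1)+1).factorial : ℕ) : ℝ) = ((n+i+1)+1) * (n+i+1).factorial := by
    rw [Nat.factorial_succ]; push_cast; ring
  have f2 : (((i+2).factorial : ℕ) : ℝ) = (i+2) * (i+1).factorial := by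
    rw [Nat.factorial_succ]; push_cast; ring
  have f3 : (((n+1).factorial : ℕ) : ℝ) = (n+1) * n.factorial := by
    rw [Nat.factorial_succ]; push_cast; ring
  rw [f1, f2, f3]
  have hn : ((n+i+1).factorial : ℝ) ≠ 0 := by positivity
  have h2 : ((i:ℝ)+2) ≠ 0 := by positivity
  have h4 : ((n:ℝ)+(i:ℝ)+1+1) ≠ 0 := by positivity
  field_simp
  ring

lemma fdiff_iter (i k : ℕ) : ∀ n : ℕ,
    fdiff^[k] (aglerMoment (i+2)) n
      = (((i:ℝ)+1)/((i:ℝ)+(k:ℝ)+1)) * aglerMoment (i+2+k) n := by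
  induction k with
  | zero =>
    intro n
    have h : ((i:ℝ)+1) ≠ 0 := by positivity
    simp only [Function.iterate_zero, id, Nat.cast_zero, add_zero, Nat.add_zero]
    rw [div_self h, one_mul]
  | succ k ih =>
    intro n
    rw [Function.iterate_succ_apply']
    show fdiff^[k] (aglerMoment (i+2)) n - fdiff^[k] (aglerMoment (i+2)) (n+1)
      = _
    rw [ih n, ih (n+1)]
    have hik : i+2+k = (i+k)+2 := by ring
    rw [hik]
    have hstep := fdiff_step (i+k) n
    have : aglerMoment ((i+k)+2) n - aglerMoment ((i+k)+2) (n+1)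
        = (((i:ℝ)+(k:ℝ)+1)/((i:ℝ)+(k:ℝ)+2)) * aglerMoment (i+k+3) n := by
      have := fdiff_step (i+k) n
      simpa [fdiff] using this
    rw [← mul_sub, this]
    have hrw : i+2+(k+1) = i+k+3 := by ring
    rw [hrw]
    have h1 : ((i:ℝ)+(k:ℝ)+1) ≠ 0 := by positivity
    have h2 : ((i:ℝ)+(k:ℝ)+2) ≠ 0 := by positivity
    have h3 : ((i:ℝ)+((k:ℝ)+1)+1) ≠ 0 := by positivity
    push_cast
    field_simp
    ring

theorem stmt17 (j : ℕ) (hj : 2 ≤ j) (m n : ℕ) :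
    (fdiff^[2*m] (aglerMoment j)) n
      = (((j : ℝ) - 1) / ((j : ℝ) + 2*(m : ℝ) - 1)) * aglerMoment (j+2*m) n := by
  obtain ⟨i, rfl⟩ : ∃ i, j = i + 2 := ⟨j - 2, by omega⟩
  have := fdiff_iter i (2*m) n
  rw [this]
  congr 1
  push_cast
  congr 1 <;> ring
end

section
/- For the weight-squared sequence of the j-th Agler shift, α^{(j)}_n := (n+1)/(n+j), the m-th forward difference satisfies (∇^m α^{(j)})_n = (1-j)·m! / ∏_{i=n}^{n+m} (j+i) for all n ≥ 0 and m ≥ 1. -/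
lemma prod_jn_pos (j : ℕ) (hj : 2 ≤ j) (a b : ℕ) :
    0 < ∏ i ∈ Finset.Icc a b, ((j : ℝ) + i) := by
  apply Finset.prod_pos
  intro i _
  have : (0:ℝ) < j := by positivity
  positivity

theorem stmt18 (j : ℕ) (hj : 2 ≤ j) (m : ℕ) (hm : 1 ≤ m) (n : ℕ) :
    (fdiff^[m] (fun n : ℕ => ((n : ℝ) + 1) / ((n : ℝ) + j))) n
      = ((1 : ℝ) - j) * (m.factorial : ℝ)
          / ∏ i ∈ Finset.Icc n (n+m), ((j : ℝ) + i) := by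
  have hjpos : (0:ℝ) < j := by positivity
  induction m generalizing n with
  | zero => omega
  | succ m ih =>
    rcases Nat.lt_or_ge m 1 with h1 | h1
    · -- m = 0
      have hm0 : m = 0 := by omega
      subst hm0
      simp only [Function.iterate_succ_apply', Function.iterate_zero_apply, fdiff]
      rw [Finset.Icc_eq_cons_Ioc (by omega : n ≤ n + 1), Finset.prod_cons]
      rw [show Finset.Ioc n (n+1) = {n+1} by
        ext x; simp only [Finset.mem_Ioc, Finset.mem_singleton]; omega]
      simp only [Finset.prod_singleton, Nat.factorial_one, Nat.cast_one]
      have h1 : ((n:ℝ) + j) ≠ 0 := by positivity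
      have h2 : ((n:ℝ) + 1 + j) ≠ 0 := by positivity
      push_cast at h1 h2 ⊢
      field_simp
      ring
    · rw [Function.iterate_succ_apply']
      have e1 := ih h1 n
      have e2 := ih h1 (n+1)
      simp only [fdiff]
      rw [e1, e2]
      set P1 := ∏ i ∈ Finset.Icc n (n+m), ((j : ℝ) + i) with hP1
      set P2 := ∏ i ∈ Finset.Icc (n+1) (n+1+m), ((j : ℝ) + i) with hP2
      clear_value P1 P2
      have key : ∏ i ∈ Finset.Icc n (n+(m+1)), ((j : ℝ) + i)
          = P1 * ((j:ℝ) + (n+m+1)) := by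
        rw [show n + (m+1) = (n+m) + 1 by ring,
          Finset.prod_Icc_succ_top (by omega : n ≤ n + m + 1), ← hP1]
        push_cast
        ring
      have key2 : ∏ i ∈ Finset.Icc n (n+(m+1)), ((j : ℝ) + i)
          = ((j:ℝ) + n) * P2 := by
        rw [show Finset.Icc n (n+(m+1)) = insert n (Finset.Icc (n+1) (n+1+m)) by
              ext x; simp only [Finset.mem_Icc, Finset.mem_insert]; omega,
          Finset.prod_insert (by simp [Finset.mem_Icc]), ← hP2]
      have hP1pos : 0 < P1 := hP1 ▸ prod_jn_pos j hj _ _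
      have hP2pos : 0 < P2 := hP2 ▸ prod_jn_pos j hj _ _
      have hc : (0:ℝ) < (j:ℝ) + (n+m+1) := by positivity
      have hjn : (0:ℝ) < (j:ℝ) + n := by positivity
      have hrel : P1 * ((j:ℝ) + (n+m+1)) = ((j:ℝ) + n) * P2 := by
        rw [← key, key2]
      have hP2eq : P2 = P1 * ((j:ℝ) + ((n:ℝ)+(m:ℝ)+1)) / ((j:ℝ) + n) := by
        rw [eq_div_iff hjn.ne']
        linear_combination -hrel
      rw [key, Nat.factorial_succ, hP2eq]
      push_cast
      field_simp
      ring
end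

section
/- Let j ≥ 2 and x > 0, and consider the perturbed moment sequence γ^{(x)}_0 = 1, γ^{(x)}_n = x·γ^{(j)}_n for n ≥ 1, where γ^{(j)}_n = (j-1)!·n!/(n+j-1)!. Then the weights-squared sequence β_n := γ^{(x)}_{n+1}/γ^{(x)}_n is m-alternating (i.e., Σ_{i=0}^{m} (-1)^i C(m,i) β_{k+i} ≤ 0 for all k ≥ 0) if and only if x ≤ 1 + (j-1)·m! / ∏_{i=1}^{m} (j+i). -/
/-!
The unperturbed sequence `b n = (n + 1) / (n + j) = 1 - (j - 1) / (n + j)` has `m`-th alternating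
difference `-(j - 1) m! / ∏_{i=0}^{m} (j + k + i) < 0`, by the classical identity
`∑ (-1)^i C(m,i) / (a + i) = m! / (a (a + 1) ⋯ (a + m))`, itself the `m`-th forward difference of
`n ↦ 1 / (a + n)` up to sign. The sequence `β` differs from `b` only at `0`, by `(x - 1) / j`, so
only the difference at `k = 0` changes: it becomes `(x - 1 - (j - 1) m! / ∏_{i=1}^{m} (j + i)) / j`.
-/

open Finset Nat fwdDiff

/-- The paper's `(∇^m f)_k`. -/
def alternatingDiff {R : Type*} [CommRing R] (m : ℕ) (f : ℕ → R) (k : ℕ) : R :=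
  ∑ i ∈ range (m + 1), (-1) ^ i * m.choose i * f (k + i)

lemma alternatingDiff_eq_neg_one_pow_mul_fwdDiff_iter {R : Type*} [CommRing R] (m : ℕ)
    (f : ℕ → R) (k : ℕ) : alternatingDiff m f k = (-1) ^ m * (Δ_[1])^[m] f k := by
  rw [alternatingDiff, fwdDiff_iter_eq_sum_shift, mul_sum]
  refine sum_congr rfl fun i hi => ?_
  obtain ⟨d, rfl⟩ := Nat.exists_eq_add_of_le (mem_range_succ_iff.mp hi)
  have hsq : ((-1 : R) ^ d) * (-1) ^ d = 1 := by rw [← mul_pow]; simp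
  simp only [Nat.add_sub_cancel_left, zsmul_eq_mul, Int.cast_mul, Int.cast_pow, Int.cast_neg,
    Int.cast_one, Int.cast_natCast, smul_eq_mul, mul_one, pow_add]
  linear_combination (-(-1) ^ i * ((i + d).choose i : R) * f (k + i)) * hsq

lemma fwdDiff_iter_const_eq_zero {G : Type*} [AddCommGroup G] (g : G) {m : ℕ} (hm : 1 ≤ m) :
    (Δ_[1])^[m] (fun _ : ℕ => g) = 0 := by
  obtain ⟨m, rfl⟩ := Nat.exists_eq_add_of_le' hm
  rw [Function.iterate_succ_apply, fwdDiff_const]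
  exact Function.iterate_fixed (fwdDiff_const 1 (0 : G)) m

lemma fwdDiff_iter_inv_add {K : Type*} [Field K] (a : K) (ha : ∀ n : ℕ, a + n ≠ 0) (m k : ℕ) :
    (Δ_[1])^[m] (fun n : ℕ => (a + n)⁻¹) k = (-1) ^ m * m ! / ∏ i ∈ range (m + 1), (a + k + i) := by
  induction m generalizing k with
  | zero => simp
  | succ m ih =>
    rw [Function.iterate_succ_apply', fwdDiff, ih, ih]
    have hprod : ∀ (b : ℕ), ∏ i ∈ range (m + 1), (a + b + i) ≠ 0 := fun b =>
      prod_ne_zero_iff.mpr fun i _ => by simpa [add_assoc] using ha (b + i)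
    have hlast : ∏ i ∈ range (m + 1 + 1), (a + k + i) =
        (∏ i ∈ range (m + 1), (a + k + i)) * (a + k + (m + 1)) := by
      rw [prod_range_succ]; push_cast; ring
    have hfirst : ∏ i ∈ range (m + 1 + 1), (a + k + i) =
        (a + k) * ∏ i ∈ range (m + 1), (a + ↑(k + 1) + i) := by
      rw [prod_range_succ', mul_comm]
      simp only [Nat.cast_zero, add_zero]
      exact congrArg _ (prod_congr rfl fun i _ => by push_cast; ring)
    rw [div_sub_div _ _ (hprod _) (hprod _), div_eq_div_iff (mul_ne_zero (hprod _) (hprod _)) (by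
      rw [hlast]; exact mul_ne_zero (hprod k) (by simpa [add_assoc] using ha (k + (m + 1)))),
      factorial_succ, Nat.cast_mul, pow_succ]
    generalize ∏ i ∈ range (m + 1 + 1), (a + k + i) = Q at *
    generalize ∏ i ∈ range (m + 1), (a + k + i) = P₀ at *
    generalize ∏ i ∈ range (m + 1), (a + ↑(k + 1) + i) = P₁ at *
    push_cast
    linear_combination ((-1) ^ m * (m ! : K) * P₀) * hfirst - ((-1) ^ m * (m ! : K) * P₁) * hlast

lemma alternatingDiff_succ_div_add {K : Type*} [Field K] (c : K) (hc : ∀ n : ℕ, c + n ≠ 0)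
    {m : ℕ} (hm : 1 ≤ m) (k : ℕ) :
    alternatingDiff m (fun n : ℕ => ((n : K) + 1) / (n + c)) k =
      -((c - 1) * m !) / ∏ i ∈ range (m + 1), (c + k + i) := by
  have hsplit : (fun n : ℕ => ((n : K) + 1) / (n + c)) =
      (fun _ => 1) + (-(c - 1)) • fun n : ℕ => (c + n)⁻¹ := by
    funext n
    simp only [Pi.add_apply, Pi.smul_apply, smul_eq_mul]
    field_simp [hc n, add_comm (n : K) c]
    ring
  have hsq : ((-1 : K) ^ m) * (-1) ^ m = 1 := by rw [← mul_pow]; simp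
  rw [alternatingDiff_eq_neg_one_pow_mul_fwdDiff_iter, hsplit, fwdDiff_iter_add,
    fwdDiff_iter_const_eq_zero _ hm, fwdDiff_iter_const_smul, Pi.add_apply, Pi.smul_apply,
    fwdDiff_iter_inv_add c hc, Pi.zero_apply, zero_add, smul_eq_mul]
  linear_combination (-(c - 1) * m ! / ∏ i ∈ range (m + 1), (c + k + i)) * hsq

section Perturbation

variable {R : Type*} [CommRing R] {β b : ℕ → R} (h : ∀ n, 1 ≤ n → β n = b n) (m : ℕ)
include h

lemma alternatingDiff_eq_of_eq_of_one_le {k : ℕ} (hk : 1 ≤ k) :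
    alternatingDiff m β k = alternatingDiff m b k :=
  sum_congr rfl fun i _ => by rw [h (k + i) (by omega)]

lemma alternatingDiff_zero_eq_add_of_eq :
    alternatingDiff m β 0 = alternatingDiff m b 0 + (β 0 - b 0) := by
  simp only [alternatingDiff, sum_range_succ', zero_add, h _ (Nat.le_add_left 1 _),
    pow_zero, choose_zero_right, Nat.cast_one, one_mul]
  ring

end Perturbation

lemma prod_range_succ_add_eq_mul_prod_Icc {K : Type*} [CommSemiring K] (a : K) (m : ℕ) :
    ∏ i ∈ range (m + 1), (a + i) = a * ∏ i ∈ Icc 1 m, (a + i) := by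
  rw [prod_range_succ', mul_comm, Nat.cast_zero, add_zero, range_eq_Ico,
    ← Finset.Ico_add_one_right_eq_Icc, prod_Ico_add' (fun i : ℕ => a + i), zero_add]

theorem stmt19_general (j : ℕ) (hj : 2 ≤ j) (x : ℝ) (m : ℕ) (hm : 1 ≤ m)
    (β : ℕ → ℝ)
    (hβ0 : β 0 = x / (j : ℝ))
    (hβ : ∀ n : ℕ, 1 ≤ n → β n = ((n : ℝ) + 1) / ((n : ℝ) + j)) :
    (∀ k : ℕ, ∑ i ∈ Finset.range (m+1), (-1 : ℝ)^i * (m.choose i) * β (k+i) ≤ 0)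
      ↔ x ≤ 1 + ((j : ℝ) - 1) * (m.factorial : ℝ) / ∏ i ∈ Finset.Icc 1 m, ((j : ℝ) + i) := by
  have hj1 : (0 : ℝ) ≤ j - 1 := sub_nonneg.mpr (by exact_mod_cast (by omega : 1 ≤ j))
  have hj_add : ∀ n : ℕ, (j : ℝ) + n ≠ 0 := fun n => by positivity
  have hb := alternatingDiff_succ_div_add (j : ℝ) hj_add hm
  have h_zero : alternatingDiff m β 0 =
      (x - (1 + ((j : ℝ) - 1) * m ! / ∏ i ∈ Icc 1 m, ((j : ℝ) + i))) / j := by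
    rw [alternatingDiff_zero_eq_add_of_eq hβ, hb, hβ0, Nat.cast_zero, add_zero,
      prod_range_succ_add_eq_mul_prod_Icc]
    have : ∏ i ∈ Icc 1 m, ((j : ℝ) + i) ≠ 0 := prod_ne_zero_iff.mpr fun i _ => hj_add i
    field_simp
    ring
  have h_nonpos (k : ℕ) (hk : 1 ≤ k) : alternatingDiff m β k ≤ 0 := by
    rw [alternatingDiff_eq_of_eq_of_one_le hβ m hk, hb]
    exact div_nonpos_of_nonpos_of_nonneg (neg_nonpos.mpr (mul_nonneg hj1 (by positivity)))
      (prod_nonneg fun i _ => by positivity)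
  have hj_pos : (0 : ℝ) < j := by positivity
  refine ⟨fun H => ?_, fun hx k => ?_⟩
  · have h := H 0
    rw [← alternatingDiff, h_zero, div_le_iff₀ hj_pos, zero_mul] at h
    linarith
  · rcases Nat.eq_zero_or_pos k with rfl | hk
    · rw [← alternatingDiff, h_zero]
      exact div_nonpos_of_nonpos_of_nonneg (by linarith) hj_pos.le
    · exact h_nonpos k hk

theorem stmt19 (j : ℕ) (hj : 2 ≤ j) (x : ℝ) (hx : 0 < x) (m : ℕ) (hm : 1 ≤ m)
    (β : ℕ → ℝ)
    (hβ0 : β 0 = x / (j : ℝ))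
    (hβ : ∀ n : ℕ, 1 ≤ n → β n = ((n : ℝ) + 1) / ((n : ℝ) + j)) :
    (∀ k : ℕ, ∑ i ∈ Finset.range (m+1), (-1 : ℝ)^i * (m.choose i) * β (k+i) ≤ 0)
      ↔ x ≤ 1 + ((j : ℝ) - 1) * (m.factorial : ℝ) / ∏ i ∈ Finset.Icc 1 m, ((j : ℝ) + i) :=
  stmt19_general j hj x m hm β hβ0 hβ
end
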